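/- Let A₁, …, A_m be nonnegative n×n real matrices. Then for the Hadamard weighted geometric mean with equal weights 1/m: ρ(A₁^{(1/m)} ∘ ⋯ ∘ A_m^{(1/m)}) ≤ ρ(A₁A₂⋯A_m)^{1/m}. -/

import Mathlib

open Matrix

/-- Spectral radius of a real matrix: max modulus of its (complex) eigenvalues. -/
noncomputable def specRad {N : Type*} [Fintype N] [DecidableEq N] (A : Matrix N N ℝ) : ℝ :=
  (spectralRadius ℂ (A.map Complex.ofReal)).toReal

/-- Operator norm induced by the Euclidean (ℓ²) norm. -/
noncomputable def l2OpNorm {N : Type*} [Fintype N] [DecidableEq N] (A : Matrix N N ℝ) : ℝ :=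
  ‖Matrix.toEuclideanCLM (𝕜 := ℝ) A‖

/-- Entrywise α-th power (with the convention 0^0 = 1, as for `Real.rpow`). -/
noncomputable def hadPow {N : Type*} (A : Matrix N N ℝ) (α : ℝ) : Matrix N N ℝ :=
  fun i j => A i j ^ α

/-- Hadamard weighted geometric mean `A₁^{(α₁)} ∘ ⋯ ∘ A_m^{(α_m)}`. -/
noncomputable def hadGeo {m : ℕ} {N : Type*} (A : Fin m → Matrix N N ℝ) (α : Fin m → ℝ) :
    Matrix N N ℝ :=
  fun i j => ∏ k, (A k i j) ^ (α k)

/-!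
Write `C` for the Hadamard geometric mean. Hölder's inequality gives, entrywise,
`C ^ s ≤ hadGeo (fun r => A r * A (r + 1) * ⋯ * A (r + s - 1))` with indices mod `m`; for `s = m`
the factors are the cyclic rearrangements of `A 0 * ⋯ * A (m - 1)`, which all have the same
spectral radius `ρ`. Gelfand's formula in the ℓ∞ operator norm makes `ρ` monotone on nonnegative
matrices and, with Hölder on row sums, gives `ρ (hadGeo M α) ≤ ∏ r, ρ (M r) ^ α r`. Hence
`ρ C ^ m ≤ ρ (C ^ m) ≤ ∏ r, ρ (A 0 * ⋯ * A (m - 1)) ^ (1 / m) = ρ (A 0 * ⋯ * A (m - 1))`.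
-/
open Filter Topology
open scoped ENNReal NNReal

attribute [local instance] Matrix.linftyOpNormedRing Matrix.linftyOpNormedAlgebra
  Matrix.linftyOpNormedAddCommGroup

theorem Real.sum_prod_rpow_le_prod_sum_rpow {ι κ : Type*} (s : Finset ι) (t : Finset κ)
    (f : κ → ι → ℝ) (hf : ∀ r ∈ t, ∀ x ∈ s, 0 ≤ f r x) (w : κ → ℝ) (hw : ∀ r ∈ t, 0 ≤ w r)
    (hw₁ : ∑ r ∈ t, w r = 1) :
    ∑ x ∈ s, ∏ r ∈ t, f r x ^ w r ≤ ∏ r ∈ t, (∑ x ∈ s, f r x) ^ w r := by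
  set S : κ → ℝ := fun r => ∑ x ∈ s, f r x
  have hS : ∀ r ∈ t, 0 ≤ S r := fun r hr => Finset.sum_nonneg (hf r hr)
  -- also when `S r = 0`, where the division is junk: then `f r` vanishes on `s`
  have hsplit : ∀ r ∈ t, ∀ x ∈ s, S r * (f r x / S r) = f r x := by
    intro r hr x hx
    rcases (hS r hr).eq_or_lt with h | h
    · rw [← h, zero_mul, eq_comm]
      exact (Finset.sum_eq_zero_iff_of_nonneg (hf r hr)).1 h.symm x hx
    · exact mul_div_cancel₀ _ h.ne'
  have amgm : ∀ x ∈ s,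
      ∏ r ∈ t, f r x ^ w r ≤ (∏ r ∈ t, S r ^ w r) * ∑ r ∈ t, w r * (f r x / S r) := by
    intro x hx
    calc ∏ r ∈ t, f r x ^ w r = ∏ r ∈ t, S r ^ w r * (f r x / S r) ^ w r :=
          Finset.prod_congr rfl fun r hr => by
            rw [← Real.mul_rpow (hS r hr) (div_nonneg (hf r hr x hx) (hS r hr)), hsplit r hr x hx]
      _ = (∏ r ∈ t, S r ^ w r) * ∏ r ∈ t, (f r x / S r) ^ w r := Finset.prod_mul_distrib
      _ ≤ _ := mul_le_mul_of_nonneg_left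
          (Real.geom_mean_le_arith_mean_weighted t w _ hw hw₁
            fun r hr => div_nonneg (hf r hr x hx) (hS r hr))
          (Finset.prod_nonneg fun r hr => Real.rpow_nonneg (hS r hr) _)
  have hmass : ∑ x ∈ s, ∑ r ∈ t, w r * (f r x / S r) ≤ 1 := by
    rw [Finset.sum_comm, ← hw₁]
    refine Finset.sum_le_sum fun r hr => ?_
    rw [← Finset.mul_sum, ← Finset.sum_div]
    exact mul_le_of_le_one_right (hw r hr) (div_self_le_one _)
  calc ∑ x ∈ s, ∏ r ∈ t, f r x ^ w r
      ≤ ∑ x ∈ s, (∏ r ∈ t, S r ^ w r) * ∑ r ∈ t, w r * (f r x / S r) := Finset.sum_le_sum amgm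
    _ = (∏ r ∈ t, S r ^ w r) * ∑ x ∈ s, ∑ r ∈ t, w r * (f r x / S r) := by rw [Finset.mul_sum]
    _ ≤ ∏ r ∈ t, S r ^ w r := mul_le_of_le_one_right
          (Finset.prod_nonneg fun r hr => Real.rpow_nonneg (hS r hr) _) hmass

namespace Matrix

section OrderedSemiring

variable {α N : Type*} [Semiring α] [PartialOrder α] [IsOrderedRing α] [Fintype N]

theorem mul_apply_nonneg {B D : Matrix N N α} (hB : ∀ i j, 0 ≤ B i j) (hD : ∀ i j, 0 ≤ D i j)
    (i j : N) : 0 ≤ (B * D) i j :=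
  Finset.sum_nonneg fun t _ => mul_nonneg (hB i t) (hD t j)

theorem mul_apply_le_mul_apply {B B' D D' : Matrix N N α} (hB' : ∀ i j, 0 ≤ B' i j)
    (hD : ∀ i j, 0 ≤ D i j) (hBB' : ∀ i j, B i j ≤ B' i j) (hDD' : ∀ i j, D i j ≤ D' i j)
    (i j : N) : (B * D) i j ≤ (B' * D') i j :=
  Finset.sum_le_sum fun t _ => mul_le_mul (hBB' i t) (hDD' t j) (hD t j) (hB' i t)

theorem pow_apply_le_pow_apply [DecidableEq N] {B D : Matrix N N α} (hB : ∀ i j, 0 ≤ B i j)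
    (hBD : ∀ i j, B i j ≤ D i j) (n : ℕ) (i j : N) : (B ^ n) i j ≤ (D ^ n) i j := by
  induction n generalizing i j with
  | zero => rfl
  | succ n ih =>
    rw [pow_succ, pow_succ]
    exact mul_apply_le_mul_apply (pow_apply_nonneg (fun i j => (hB i j).trans (hBD i j)) n) hB
      ih hBD i j

end OrderedSemiring

variable {N : Type*} [Fintype N]

theorem linfty_opNorm_le_iff {B : Matrix N N ℝ} {c : ℝ} (hc : 0 ≤ c) :
    ‖B‖ ≤ c ↔ ∀ i, ∑ j, ‖B i j‖ ≤ c := by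
  lift c to ℝ≥0 using hc
  rw [linfty_opNorm_def, NNReal.coe_le_coe, Finset.sup_le_iff]
  simp only [Finset.mem_univ, forall_const, ← NNReal.coe_le_coe, NNReal.coe_sum, coe_nnnorm]

theorem sum_norm_le_linfty_opNorm (B : Matrix N N ℝ) (i : N) : ∑ j, ‖B i j‖ ≤ ‖B‖ :=
  (linfty_opNorm_le_iff (norm_nonneg B)).1 le_rfl i

theorem linfty_opNorm_le_of_le {B D : Matrix N N ℝ} (hB : ∀ i j, 0 ≤ B i j)
    (hBD : ∀ i j, B i j ≤ D i j) : ‖B‖ ≤ ‖D‖ := by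
  refine (linfty_opNorm_le_iff (norm_nonneg D)).2 fun i =>
    le_trans (Finset.sum_le_sum fun j _ => ?_) (D.sum_norm_le_linfty_opNorm i)
  rw [Real.norm_of_nonneg (hB i j)]
  exact (hBD i j).trans (le_abs_self _)

theorem linfty_opNorm_map_ofReal (B : Matrix N N ℝ) : ‖B.map Complex.ofReal‖ = ‖B‖ := by
  simp only [linfty_opNorm_def, map_apply, Complex.nnnorm_real]

variable [DecidableEq N]

theorem map_ofReal_mul (B D : Matrix N N ℝ) :
    (B * D).map Complex.ofReal = B.map Complex.ofReal * D.map Complex.ofReal :=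
  map_mul Complex.ofRealHom.mapMatrix B D

theorem map_ofReal_pow (B : Matrix N N ℝ) (n : ℕ) :
    (B ^ n).map Complex.ofReal = B.map Complex.ofReal ^ n :=
  map_pow Complex.ofRealHom.mapMatrix B n

theorem spectralRadius_map_ofReal_ne_top (B : Matrix N N ℝ) :
    spectralRadius ℂ (B.map Complex.ofReal) ≠ ⊤ :=
  ne_top_of_le_ne_top (by simp [ENNReal.mul_eq_top])
    (spectrum.spectralRadius_le_pow_nnnorm_pow_one_div ℂ (B.map Complex.ofReal) 0)

end Matrix

theorem spectrum.spectralRadius_mul_comm {𝕜 A : Type*} [NormedField 𝕜] [Ring A] [Algebra 𝕜 A]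
    (a b : A) : spectralRadius 𝕜 (a * b) = spectralRadius 𝕜 (b * a) := by
  -- the spectral value `0` contributes nothing to the supremum
  have hzero : ∀ S : Set 𝕜, ⨆ k ∈ S, (‖k‖₊ : ℝ≥0∞) = ⨆ k ∈ S \ {0}, (‖k‖₊ : ℝ≥0∞) := by
    intro S
    refine le_antisymm (iSup₂_le fun k hk => ?_) (biSup_mono fun k hk => hk.1)
    rcases eq_or_ne k 0 with rfl | hne
    · simp
    · exact le_iSup₂ (f := fun k (_ : k ∈ S \ {0}) => (‖k‖₊ : ℝ≥0∞)) k ⟨hk, hne⟩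
  rw [spectralRadius, spectralRadius, hzero, spectrum.nonzero_mul_comm, ← hzero]

section SpecRad

variable {N : Type*} [Fintype N] [DecidableEq N]

theorem specRad_nonneg (B : Matrix N N ℝ) : 0 ≤ specRad B := ENNReal.toReal_nonneg

theorem tendsto_norm_pow_rpow_specRad (B : Matrix N N ℝ) :
    Tendsto (fun n : ℕ => ‖B ^ n‖ ^ (1 / n : ℝ)) atTop (𝓝 (specRad B)) := by
  refine ((ENNReal.tendsto_toReal B.spectralRadius_map_ofReal_ne_top).comp
    (spectrum.pow_nnnorm_pow_one_div_tendsto_nhds_spectralRadius _)).congr fun n => ?_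
  rw [Function.comp_apply, ← ENNReal.toReal_rpow, ← Matrix.map_ofReal_pow, ENNReal.coe_toReal,
    coe_nnnorm, Matrix.linfty_opNorm_map_ofReal]

theorem specRad_pow_le (B : Matrix N N ℝ) {n : ℕ} (hn : n ≠ 0) :
    specRad B ^ n ≤ specRad (B ^ n) := by
  rw [specRad, specRad, ← ENNReal.toReal_pow, Matrix.map_ofReal_pow]
  exact ENNReal.toReal_mono (B.map_ofReal_pow n ▸ (B ^ n).spectralRadius_map_ofReal_ne_top)
    (spectrum.spectralRadius_pow_le _ n hn)

theorem specRad_mul_comm (B D : Matrix N N ℝ) : specRad (B * D) = specRad (D * B) := by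
  rw [specRad, specRad, Matrix.map_ofReal_mul, Matrix.map_ofReal_mul,
    spectrum.spectralRadius_mul_comm]

theorem specRad_le_of_le {B D : Matrix N N ℝ} (hB : ∀ i j, 0 ≤ B i j)
    (hBD : ∀ i j, B i j ≤ D i j) : specRad B ≤ specRad D :=
  le_of_tendsto_of_tendsto' (tendsto_norm_pow_rpow_specRad B) (tendsto_norm_pow_rpow_specRad D)
    fun n => Real.rpow_le_rpow (norm_nonneg _)
      (Matrix.linfty_opNorm_le_of_le (Matrix.pow_apply_nonneg hB n)
        (Matrix.pow_apply_le_pow_apply hB hBD n))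
      (by positivity)

end SpecRad

section HadGeo

variable {m : ℕ} {N : Type*} {α : Fin m → ℝ}

theorem hadGeo_nonneg {M : Fin m → Matrix N N ℝ} (hM : ∀ r i j, 0 ≤ M r i j) (i j : N) :
    0 ≤ hadGeo M α i j :=
  Finset.prod_nonneg fun r _ => Real.rpow_nonneg (hM r i j) _

theorem hadGeo_comp_perm (M : Fin m → Matrix N N ℝ) (α : Fin m → ℝ) (e : Equiv.Perm (Fin m)) :
    hadGeo (fun r => M (e r)) (fun r => α (e r)) = hadGeo M α :=
  funext₂ fun i j => Equiv.prod_comp e fun r => M r i j ^ α r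

variable [Fintype N]

theorem hadGeo_mul_apply_le {M M' : Fin m → Matrix N N ℝ} (hM : ∀ r i j, 0 ≤ M r i j)
    (hM' : ∀ r i j, 0 ≤ M' r i j) (hα : ∀ r, 0 ≤ α r) (hα₁ : ∑ r, α r = 1) (i j : N) :
    (hadGeo M α * hadGeo M' α) i j ≤ hadGeo (fun r => M r * M' r) α i j :=
  calc (hadGeo M α * hadGeo M' α) i j = ∑ t, ∏ r, (M r i t * M' r t j) ^ α r :=
        Finset.sum_congr rfl fun t _ => by
          simp only [hadGeo, ← Finset.prod_mul_distrib, Real.mul_rpow (hM _ i t) (hM' _ t j)]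
    _ ≤ ∏ r, (∑ t, M r i t * M' r t j) ^ α r :=
        Real.sum_prod_rpow_le_prod_sum_rpow _ _ _
          (fun r _ t _ => mul_nonneg (hM r i t) (hM' r t j)) α (fun r _ => hα r) hα₁
    _ = hadGeo (fun r => M r * M' r) α i j := rfl

theorem hadGeo_pow_apply_le [DecidableEq N] {M : Fin m → Matrix N N ℝ}
    (hM : ∀ r i j, 0 ≤ M r i j) (hα : ∀ r, 0 ≤ α r) (hα₁ : ∑ r, α r = 1) (n : ℕ) (i j : N) :
    (hadGeo M α ^ n) i j ≤ hadGeo (fun r => M r ^ n) α i j := by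
  induction n generalizing i j with
  | zero =>
    rcases eq_or_ne i j with rfl | hij
    · simp [hadGeo]
    · rw [pow_zero, Matrix.one_apply_ne hij]
      exact hadGeo_nonneg (fun r => Matrix.pow_apply_nonneg (hM r) 0) i j
  | succ n ih =>
    rw [pow_succ]
    exact (Matrix.mul_apply_le_mul_apply
        (hadGeo_nonneg fun r => Matrix.pow_apply_nonneg (hM r) n) (hadGeo_nonneg hM) ih
        (fun _ _ => le_rfl) i j).trans
      (hadGeo_mul_apply_le (fun r => Matrix.pow_apply_nonneg (hM r) n) hM hα hα₁ i j)

theorem norm_hadGeo_le {M : Fin m → Matrix N N ℝ} (hM : ∀ r i j, 0 ≤ M r i j)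
    (hα : ∀ r, 0 ≤ α r) (hα₁ : ∑ r, α r = 1) : ‖hadGeo M α‖ ≤ ∏ r, ‖M r‖ ^ α r := by
  refine (Matrix.linfty_opNorm_le_iff
    (Finset.prod_nonneg fun r _ => Real.rpow_nonneg (norm_nonneg _) _)).2 fun i => ?_
  calc ∑ j, ‖hadGeo M α i j‖ = ∑ j, ∏ r, M r i j ^ α r :=
        Finset.sum_congr rfl fun j _ => Real.norm_of_nonneg (hadGeo_nonneg hM i j)
    _ ≤ ∏ r, (∑ j, M r i j) ^ α r :=
        Real.sum_prod_rpow_le_prod_sum_rpow _ _ _ (fun r _ j _ => hM r i j) α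
          (fun r _ => hα r) hα₁
    _ ≤ ∏ r, ‖M r‖ ^ α r := by
        refine Finset.prod_le_prod
          (fun r _ => Real.rpow_nonneg (Finset.sum_nonneg fun j _ => hM r i j) _) fun r _ => ?_
        refine Real.rpow_le_rpow (Finset.sum_nonneg fun j _ => hM r i j) ?_ (hα r)
        simpa only [Real.norm_of_nonneg (hM r i _)] using (M r).sum_norm_le_linfty_opNorm i

theorem specRad_hadGeo_le [DecidableEq N] {M : Fin m → Matrix N N ℝ}
    (hM : ∀ r i j, 0 ≤ M r i j) (hα : ∀ r, 0 ≤ α r) (hα₁ : ∑ r, α r = 1) :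
    specRad (hadGeo M α) ≤ ∏ r, specRad (M r) ^ α r := by
  refine le_of_tendsto_of_tendsto' (tendsto_norm_pow_rpow_specRad _)
    (tendsto_finsetProd _ fun r _ => (tendsto_norm_pow_rpow_specRad (M r)).rpow_const
      (Or.inr (hα r))) fun n => ?_
  have hnorm : ∀ r, 0 ≤ ‖M r ^ n‖ ^ α r := fun r => Real.rpow_nonneg (norm_nonneg _) _
  calc ‖hadGeo M α ^ n‖ ^ (1 / n : ℝ)
      ≤ (∏ r, ‖M r ^ n‖ ^ α r) ^ (1 / n : ℝ) := by
        refine Real.rpow_le_rpow (norm_nonneg _) ?_ (by positivity)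
        exact (Matrix.linfty_opNorm_le_of_le (Matrix.pow_apply_nonneg (hadGeo_nonneg hM) n)
          (hadGeo_pow_apply_le hM hα hα₁ n)).trans
          (norm_hadGeo_le (fun r => Matrix.pow_apply_nonneg (hM r) n) hα hα₁)
    _ = ∏ r, (‖M r ^ n‖ ^ (1 / n : ℝ)) ^ α r := by
        rw [← Real.finsetProd_rpow _ _ fun r _ => hnorm r]
        refine Finset.prod_congr rfl fun r _ => ?_
        rw [← Real.rpow_mul (norm_nonneg _), ← Real.rpow_mul (norm_nonneg _), mul_comm]

end HadGeo

section Cyclic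

open Fin.NatCast

variable {m : ℕ} [NeZero m]

def cycProd {M : Type*} [Monoid M] (A : Fin m → M) : Fin m → ℕ → M
  | _, 0 => 1
  | r, s + 1 => A r * cycProd A (r + 1) s

section Monoid

variable {M : Type*} [Monoid M] (A : Fin m → M)

theorem cycProd_add (r : Fin m) (a b : ℕ) :
    cycProd A r (a + b) = cycProd A r a * cycProd A (r + a) b := by
  induction a generalizing r with
  | zero => simp [cycProd]
  | succ a ih =>
    rw [Nat.add_right_comm, cycProd, cycProd, ih, mul_assoc, Nat.cast_succ, add_comm (a : Fin m),
      add_assoc]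

theorem cycProd_eq_prod_ofFn (r : Fin m) (s : ℕ) :
    cycProd A r s = (List.ofFn fun t : Fin s => A (r + (t : ℕ))).prod := by
  induction s generalizing r with
  | zero => rfl
  | succ s ih =>
    simp only [cycProd, ih, List.ofFn_succ, List.prod_cons, Fin.val_zero, Nat.cast_zero, add_zero,
      Fin.val_succ, Nat.cast_succ]
    ac_rfl

theorem cycProd_zero_self : cycProd A 0 m = (List.ofFn A).prod := by
  simp only [cycProd_eq_prod_ofFn, zero_add, Fin.cast_val_eq_self]

end Monoid

variable {N : Type*} [Fintype N] [DecidableEq N]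

theorem specRad_cycProd (A : Fin m → Matrix N N ℝ) (r : Fin m) :
    specRad (cycProd A r m) = specRad (List.ofFn A).prod := by
  have hm : (r : ℕ) + (m - r) = m := Nat.add_sub_cancel' r.isLt.le
  have hshift : r + ((m - r : ℕ) : Fin m) = 0 := by
    simpa only [Nat.cast_add, Fin.cast_val_eq_self, Fin.natCast_self] using
      congrArg (fun t : ℕ => (t : Fin m)) hm
  have hP := cycProd_add A 0 r (m - r)
  have hQ := cycProd_add A r (m - r) r
  rw [zero_add, Fin.cast_val_eq_self, hm, cycProd_zero_self] at hP
  rw [Nat.sub_add_cancel r.isLt.le, hshift] at hQ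
  rw [hP, hQ, specRad_mul_comm]

theorem cycProd_nonneg {A : Fin m → Matrix N N ℝ} (hA : ∀ r i j, 0 ≤ A r i j) (r : Fin m) (s : ℕ)
    (i j : N) : 0 ≤ cycProd A r s i j := by
  induction s generalizing r i j with
  | zero => exact Matrix.pow_apply_nonneg (hA r) 0 i j
  | succ s ih => exact Matrix.mul_apply_nonneg (hA r) (ih (r + 1)) i j

theorem hadGeo_pow_apply_le_hadGeo_cycProd {A : Fin m → Matrix N N ℝ}
    (hA : ∀ r i j, 0 ≤ A r i j) (s : ℕ) (i j : N) :
    (hadGeo A (fun _ => (1 : ℝ) / m) ^ s) i j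
      ≤ hadGeo (fun r => cycProd A r s) (fun _ => (1 : ℝ) / m) i j := by
  have hα : ∀ _r : Fin m, (0 : ℝ) ≤ 1 / m := fun _ => by positivity
  have hα₁ : ∑ _r : Fin m, (1 : ℝ) / m = 1 := by simp
  induction s generalizing i j with
  | zero => exact hadGeo_pow_apply_le hA hα hα₁ 0 i j
  | succ s ih =>
    -- constant weights make `hadGeo` invariant under the cyclic shift `r ↦ r + 1`
    rw [← hadGeo_comp_perm (fun r => cycProd A r s) _ (Equiv.addRight 1)] at ih
    rw [pow_succ']
    exact (Matrix.mul_apply_le_mul_apply (hadGeo_nonneg hA)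
        (Matrix.pow_apply_nonneg (hadGeo_nonneg hA) s) (fun _ _ => le_rfl) ih i j).trans
      (hadGeo_mul_apply_le hA (fun r => cycProd_nonneg hA (r + 1) s) hα hα₁ i j)

end Cyclic

theorem stmt4 {m : ℕ} (hm : 0 < m) {N : Type*} [Fintype N] [DecidableEq N]
    (A : Fin m → Matrix N N ℝ) (hA : ∀ k, ∀ i j, 0 ≤ A k i j) :
    specRad (hadGeo A (fun _ => (1 : ℝ) / m)) ≤ specRad (List.ofFn A).prod ^ ((1 : ℝ) / m) := by
  have : NeZero m := ⟨hm.ne'⟩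
  set C := hadGeo A (fun _ => (1 : ℝ) / m)
  set ρP := specRad (List.ofFn A).prod
  have hC : ∀ i j, 0 ≤ C i j := hadGeo_nonneg hA
  have hρC : specRad C ^ m ≤ ρP :=
    calc specRad C ^ m ≤ specRad (C ^ m) := specRad_pow_le C hm.ne'
      _ ≤ specRad (hadGeo (fun r => cycProd A r m) (fun _ => (1 : ℝ) / m)) :=
          specRad_le_of_le (Matrix.pow_apply_nonneg hC m) (hadGeo_pow_apply_le_hadGeo_cycProd hA m)
      _ ≤ ∏ r, specRad (cycProd A r m) ^ ((1 : ℝ) / m) :=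
          specRad_hadGeo_le (fun r => cycProd_nonneg hA r m) (fun _ => by positivity) (by simp)
      _ = ρP := by
          rw [Finset.prod_congr rfl fun r _ => by rw [specRad_cycProd], Finset.prod_const,
            Finset.card_univ, Fintype.card_fin, one_div,
            Real.rpow_inv_natCast_pow (specRad_nonneg _) hm.ne']
  calc specRad C = (specRad C ^ m) ^ ((1 : ℝ) / m) := by
        rw [one_div, Real.pow_rpow_inv_natCast (specRad_nonneg C) hm.ne']
    _ ≤ ρP ^ ((1 : ℝ) / m) :=
        Real.rpow_le_rpow (pow_nonneg (specRad_nonneg C) m) hρC (by positivity)
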